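/- Let a, b, τ > 0 and s ∈ ℝ, and define the density of λ on (0,∞) by p_λ(t) = 2t · C(a,b,τ,s)^{−1} t^{2(b−1)} (1+t²)^{−(a+b)} exp{−s/(1+t²)} {τ² + (1−τ²)/(1+t²)}^{−1} (the density of λ when λ² = 1/κ − 1 and κ has the hypergeometric-beta density π_{a,b,τ,s}). Then p_λ has polynomial upper tail of order t^{−(2a+1)}: lim_{t→∞} t^{2a+1} p_λ(t) = 2 / (τ² C(a,b,τ,s)). -/

import Mathlib

open MeasureTheory Set Filter

/-- The unnormalized hypergeometric-beta kernel
`κ^{a−1} (1−κ)^{b−1} {1/τ² + (1 − 1/τ²)κ}^{−1} e^{−sκ}`. -/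
noncomputable def hbKer (a b τ s κ : ℝ) : ℝ :=
  κ ^ (a - 1) * (1 - κ) ^ (b - 1) * (1 / τ ^ 2 + (1 - 1 / τ ^ 2) * κ)⁻¹ *
    Real.exp (-(s * κ))

/-- The normalizing constant `C(a,b,τ,s)`. -/
noncomputable def hbC (a b τ s : ℝ) : ℝ :=
  ∫ κ in Set.Ioo (0 : ℝ) 1, hbKer a b τ s κ

/-- The hypergeometric-beta density `π_{a,b,τ,s}` on `(0,1)`. -/
noncomputable def hbPdf (a b τ s κ : ℝ) : ℝ :=
  (hbC a b τ s)⁻¹ * hbKer a b τ s κ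

/-- The density of `λ` when `λ² = 1/κ − 1` and `κ ~ HB(a,b,τ,s)`. -/
noncomputable def lamPdf (a b τ s t : ℝ) : ℝ :=
  2 * t * (hbC a b τ s)⁻¹ * t ^ (2 * (b - 1)) * (1 + t ^ 2) ^ (-(a + b)) *
    Real.exp (-s / (1 + t ^ 2)) * (τ ^ 2 + (1 - τ ^ 2) / (1 + t ^ 2))⁻¹

/- With `u = (1 + t²)⁻¹ → 0`, the powers of `t` in `t^{2a+1} p_λ(t)` combine with
`(1 + t²)^{-(a+b)}` into `(t² / (1 + t²))^{a+b} = (1 - u)^{a+b}`, so `t^{2a+1} p_λ(t)` is a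
function of `u` alone, continuous at `u = 0` because `τ² + (1 - τ²) u → τ² ≠ 0`. -/

noncomputable def lamTail (a b τ s u : ℝ) : ℝ :=
  2 * (hbC a b τ s)⁻¹ * (1 - u) ^ (a + b) * Real.exp (-s * u) * (τ ^ 2 + (1 - τ ^ 2) * u)⁻¹

lemma tendsto_one_add_sq_inv_atTop :
    Tendsto (fun t : ℝ => (1 + t ^ 2)⁻¹) atTop (nhds 0) :=
  tendsto_inv_atTop_zero.comp <|
    tendsto_atTop_add_const_left _ _ (tendsto_pow_atTop two_ne_zero)

lemma rpow_mul_rpow_mul_one_add_sq_rpow {a b t : ℝ} (ht : 0 < t) :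
    t ^ (2 * a + 1) * t * t ^ (2 * (b - 1)) * (1 + t ^ 2) ^ (-(a + b)) =
      (1 - (1 + t ^ 2)⁻¹) ^ (a + b) := by
  have h1t : 0 < 1 + t ^ 2 := by positivity
  have hpow : t ^ (2 * a + 1) * t * t ^ (2 * (b - 1)) = (t ^ 2) ^ (a + b) := by
    calc t ^ (2 * a + 1) * t * t ^ (2 * (b - 1)) = t ^ (2 * a + 1 + 1 + 2 * (b - 1)) := by
          rw [Real.rpow_add ht (2 * a + 1 + 1), Real.rpow_add ht (2 * a + 1), Real.rpow_one]
      _ = (t ^ 2) ^ (a + b) := by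
          rw [← Real.rpow_two, ← Real.rpow_mul ht.le]
          ring_nf
  have hbase : 1 - (1 + t ^ 2)⁻¹ = t ^ 2 / (1 + t ^ 2) := by
    field_simp
    ring
  rw [hpow, hbase, Real.div_rpow (by positivity) h1t.le, Real.rpow_neg h1t.le, div_eq_mul_inv]

lemma rpow_mul_lamPdf {a b τ s t : ℝ} (ht : 0 < t) :
    t ^ (2 * a + 1) * lamPdf a b τ s t = lamTail a b τ s (1 + t ^ 2)⁻¹ := by
  rw [lamTail, ← rpow_mul_rpow_mul_one_add_sq_rpow ht, lamPdf]
  simp only [div_eq_mul_inv]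
  ring

lemma continuousAt_lamTail_zero {a b τ s : ℝ} (hτ : τ ≠ 0) : ContinuousAt (lamTail a b τ s) 0 := by
  unfold lamTail
  fun_prop (disch := simp [hτ])

lemma lamTail_zero (a b τ s : ℝ) : lamTail a b τ s 0 = 2 / (τ ^ 2 * hbC a b τ s) := by
  simp only [lamTail, sub_zero, Real.one_rpow, mul_zero, Real.exp_zero, add_zero]
  ring

theorem lamPdf_polynomial_tail_general (a b τ s : ℝ) (hτ : 0 < τ) :
    Tendsto (fun t : ℝ => t ^ (2 * a + 1) * lamPdf a b τ s t)
      atTop (nhds (2 / (τ ^ 2 * hbC a b τ s))) := by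
  rw [← lamTail_zero]
  refine ((continuousAt_lamTail_zero hτ.ne').tendsto.comp tendsto_one_add_sq_inv_atTop).congr' ?_
  filter_upwards [eventually_gt_atTop 0] with t ht
  exact (rpow_mul_lamPdf ht).symm

theorem lamPdf_polynomial_tail (a b τ s : ℝ) (ha : 0 < a) (hb : 0 < b) (hτ : 0 < τ) :
    Tendsto (fun t : ℝ => t ^ (2 * a + 1) * lamPdf a b τ s t)
      atTop (nhds (2 / (τ ^ 2 * hbC a b τ s))) :=
  lamPdf_polynomial_tail_general a b τ s hτ
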